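/- arXiv:math/0205070 — 4 statements merged into one kernel-verified Lean document; each statement's English description precedes it below -/
import Mathlib

section
/- Let X ⊆ ℂ_p be a set and let f, f' : ℂ_p → ℂ_p be such that for every x ∈ X, f has derivative f'(x) within X at x. Assume f is non-constant on X and that for all distinct x, y ∈ X one has |(f(x) − f(y))/(x − y)|² = |f'(x) · f'(y)|. Then f is injective on X. -/
/-- `K` is (a field isometrically isomorphic to) the field `ℂ_p` of `p`-adic complex
numbers: a complete algebraically closed ultrametric normed field, extending `ℚ_p`
isometrically, in which the elements algebraic over `ℚ_p` are dense. -/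
structure IsPadicComplexField (p : ℕ) [Fact p.Prime] (K : Type*)
    [NontriviallyNormedField K] [Algebra ℚ_[p] K] : Prop where
  isAlgClosed : IsAlgClosed K
  completeSpace : CompleteSpace K
  isUltrametricDist : IsUltrametricDist K
  norm_algebraMap : ∀ q : ℚ_[p], ‖algebraMap ℚ_[p] K q‖ = ‖q‖
  dense_algebraic : Dense {x : K | IsAlgebraic ℚ_[p] x}

theorem injOn_of_norm_identity
    {p : ℕ} [Fact p.Prime] {K : Type*} [NontriviallyNormedField K] [Algebra ℚ_[p] K]
    (hK : IsPadicComplexField p K)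
    (X : Set K) (f f' : K → K)
    (hderiv : ∀ x ∈ X, HasDerivWithinAt f (f' x) X x)
    (hnc : ∃ x ∈ X, ∃ y ∈ X, f x ≠ f y)
    (hid : ∀ x ∈ X, ∀ y ∈ X, x ≠ y →
      ‖(f x - f y) / (x - y)‖ ^ 2 = ‖f' x * f' y‖) :
    Set.InjOn f X := by
  -- If some derivative vanishes, f is constant on X
  have hconst : ∀ c ∈ X, f' c = 0 → ∀ y ∈ X, f y = f c := by
    intro c hc hc0 y hy
    by_contra hne
    have hcy : c ≠ y := by rintro rfl; exact hne rfl
    have h := hid c hc y hy hcy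
    rw [hc0, zero_mul, norm_zero, pow_eq_zero_iff (two_ne_zero), norm_eq_zero,
      div_eq_zero_iff, sub_eq_zero, sub_eq_zero] at h
    rcases h with h | h
    · exact hne h.symm
    · exact hcy h
  intro a ha b hb hfab
  by_contra hab
  have h := hid a ha b hb hab
  rw [hfab, sub_self, zero_div, norm_zero] at h
  have h0 : f' a * f' b = 0 := by
    have := h.symm
    rw [show (0:ℝ)^2 = 0 by ring, norm_eq_zero] at this
    exact this
  obtain ⟨x, hx, y, hy, hxy⟩ := hnc
  rcases mul_eq_zero.mp h0 with h' | h'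
  · exact hxy ((hconst a ha h' x hx).trans (hconst a ha h' y hy).symm)
  · exact hxy ((hconst b hb h' x hx).trans (hconst b hb h' y hy).symm)
end

section
/- Let X ⊆ ℂ_p be a set and f, f' : ℂ_p → ℂ_p be functions such that f is injective on X and for all distinct x, y ∈ X one has |(f(x) − f(y))/(x − y)|² = |f'(x) · f'(y)|. Then for all pairwise distinct a, b, c, d ∈ X, the values f(a), f(b), f(c), f(d) are pairwise distinct and |R(a, b; c, d)| = |R(f(a), f(b); f(c), f(d))|, where R denotes the cross-ratio. -/
/-- The cross-ratio `R(a, b; c, d) = ((a - c)(b - d)) / ((a - d)(b - c))`. -/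
def crossRatio {K : Type*} [Field K] (a b c d : K) : K :=
  ((a - c) * (b - d)) / ((a - d) * (b - c))

theorem norm_crossRatio_eq_of_norm_identity
    {p : ℕ} [Fact p.Prime] {K : Type*} [NontriviallyNormedField K] [Algebra ℚ_[p] K]
    (hK : IsPadicComplexField p K)
    (X : Set K) (f f' : K → K)
    (hinj : Set.InjOn f X)
    (hid : ∀ x ∈ X, ∀ y ∈ X, x ≠ y →
      ‖(f x - f y) / (x - y)‖ ^ 2 = ‖f' x * f' y‖)
    (a b c d : K) (ha : a ∈ X) (hb : b ∈ X) (hc : c ∈ X) (hd : d ∈ X)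
    (hab : a ≠ b) (hac : a ≠ c) (had : a ≠ d) (hbc : b ≠ c) (hbd : b ≠ d)
    (hcd : c ≠ d) :
    (f a ≠ f b ∧ f a ≠ f c ∧ f a ≠ f d ∧ f b ≠ f c ∧ f b ≠ f d ∧ f c ≠ f d) ∧
      ‖crossRatio a b c d‖ = ‖crossRatio (f a) (f b) (f c) (f d)‖ := by
  have hfab : f a ≠ f b := fun h => hab (hinj ha hb h)
  have hfac : f a ≠ f c := fun h => hac (hinj ha hc h)
  have hfad : f a ≠ f d := fun h => had (hinj ha hd h)
  have hfbc : f b ≠ f c := fun h => hbc (hinj hb hc h)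
  have hfbd : f b ≠ f d := fun h => hbd (hinj hb hd h)
  have hfcd : f c ≠ f d := fun h => hcd (hinj hc hd h)
  refine ⟨⟨hfab, hfac, hfad, hfbc, hfbd, hfcd⟩, ?_⟩
  have key : ∀ x ∈ X, ∀ y ∈ X, x ≠ y →
      ‖f x - f y‖ ^ 2 = ‖f' x‖ * ‖f' y‖ * ‖x - y‖ ^ 2 := by
    intro x hx y hy hxy
    have h := hid x hx y hy hxy
    have hxy' : ‖x - y‖ ≠ 0 := by
      simpa using sub_ne_zero.mpr hxy
    rw [norm_div, div_pow, norm_mul, div_eq_iff (pow_ne_zero 2 hxy')] at h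
    exact h
  have kac := key a ha c hc hac
  have kbd := key b hb d hd hbd
  have kad := key a ha d hd had
  have kbc := key b hb c hc hbc
  -- positivity
  have pos : ∀ x ∈ X, ∀ y ∈ X, x ≠ y → f x ≠ f y → 0 < ‖f' x‖ ∧ 0 < ‖f' y‖ := by
    intro x hx y hy hxy hfxy
    have h := key x hx y hy hxy
    have hne : f x - f y ≠ 0 := sub_ne_zero.mpr hfxy
    have h1 : 0 < ‖f x - f y‖ ^ 2 := pow_pos (norm_pos_iff.mpr hne) 2
    rw [h] at h1
    constructor
    · rcases lt_or_eq_of_le (norm_nonneg (f' x)) with h' | h'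
      · exact h'
      · simp [← h'] at h1
    · rcases lt_or_eq_of_le (norm_nonneg (f' y)) with h' | h'
      · exact h'
      · simp [← h'] at h1
  obtain ⟨pa, pc⟩ := pos a ha c hc hac hfac
  obtain ⟨pb, pd⟩ := pos b hb d hd hbd hfbd
  have nac : (0:ℝ) < ‖a - c‖ := by simpa using sub_ne_zero.mpr hac
  have nbd : (0:ℝ) < ‖b - d‖ := by simpa using sub_ne_zero.mpr hbd
  have nad : (0:ℝ) < ‖a - d‖ := by simpa using sub_ne_zero.mpr had
  have nbc : (0:ℝ) < ‖b - c‖ := by simpa using sub_ne_zero.mpr hbc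
  have nfad : (0:ℝ) < ‖f a - f d‖ := by simpa using sub_ne_zero.mpr hfad
  have nfbc : (0:ℝ) < ‖f b - f c‖ := by simpa using sub_ne_zero.mpr hfbc
  have hsq : ‖crossRatio a b c d‖ ^ 2 = ‖crossRatio (f a) (f b) (f c) (f d)‖ ^ 2 := by
    simp only [crossRatio, norm_div, norm_mul, div_pow, mul_pow]
    rw [kac, kbd, kad, kbc]
    field_simp
  have h1 : (0:ℝ) ≤ ‖crossRatio a b c d‖ := norm_nonneg _
  have h2 : (0:ℝ) ≤ ‖crossRatio (f a) (f b) (f c) (f d)‖ := norm_nonneg _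
  nlinarith [hsq, h1, h2]
end

section
/- Let Y ⊆ ℂ_p be a set, let f, f' : ℂ_p → ℂ_p be such that for every x ∈ Y, f has derivative f'(x) within Y at x, and let φ(w) = (aw + b)/(cw + d) be a homography (a, b, c, d ∈ ℂ_p, ad − bc ≠ 0) with c·f(x) + d ≠ 0 for all x ∈ Y. Let g = φ ∘ f and g'(x) = φ'(f(x))·f'(x) where φ'(w) = (ad − bc)/(cw + d)². If g is injective on Y and |(g(x) − g(y))/(x − y)|² = |g'(x) · g'(y)| for all distinct x, y ∈ Y, then |(f(x) − f(y))/(x − y)|² = |f'(x) · f'(y)| for all distinct x, y ∈ Y. -/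
theorem homography_sub_homography {K : Type*} [Field K] (a b c d u v : K)
    (hu : c * u + d ≠ 0) (hv : c * v + d ≠ 0) :
    (a * u + b) / (c * u + d) - (a * v + b) / (c * v + d) =
      (a * d - b * c) / ((c * u + d) * (c * v + d)) * (u - v) := by
  rw [div_sub_div _ _ hu hv]
  ring

theorem norm_sq_eq_norm_of_norm_sq_mul_eq {K : Type*} [NormedDivisionRing K] {k q r : K}
    (hk : k ≠ 0) (h : ‖k * q‖ ^ 2 = ‖k ^ 2 * r‖) : ‖q‖ ^ 2 = ‖r‖ := by
  rw [norm_mul, norm_mul, mul_pow, norm_pow] at h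
  exact mul_left_cancel₀ (pow_ne_zero 2 (norm_ne_zero_iff.mpr hk)) h

theorem norm_identity_of_homography_composition_general
    {K : Type*} [NontriviallyNormedField K]
    (Y : Set K) (f f' : K → K)
    (a b c d : K) (hdet : a * d - b * c ≠ 0)
    (hcd : ∀ x ∈ Y, c * f x + d ≠ 0)
    (g g' : K → K)
    (hg : ∀ x, g x = (a * f x + b) / (c * f x + d))
    (hg' : ∀ x, g' x = (a * d - b * c) / (c * f x + d) ^ 2 * f' x)
    (hgid : ∀ x ∈ Y, ∀ y ∈ Y, x ≠ y →
      ‖(g x - g y) / (x - y)‖ ^ 2 = ‖g' x * g' y‖) :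
    ∀ x ∈ Y, ∀ y ∈ Y, x ≠ y →
      ‖(f x - f y) / (x - y)‖ ^ 2 = ‖f' x * f' y‖ := by
  intro x hx y hy hxy
  set k := (a * d - b * c) / ((c * f x + d) * (c * f y + d)) with hk_def
  have hk : k ≠ 0 := div_ne_zero hdet (mul_ne_zero (hcd x hx) (hcd y hy))
  have hquot : (g x - g y) / (x - y) = k * ((f x - f y) / (x - y)) := by
    rw [hg, hg, homography_sub_homography a b c d _ _ (hcd x hx) (hcd y hy), mul_div_assoc]
  have hderivs : g' x * g' y = k ^ 2 * (f' x * f' y) := by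
    simp only [hg', hk_def, div_eq_mul_inv, mul_inv, mul_pow, inv_pow]
    ring
  apply norm_sq_eq_norm_of_norm_sq_mul_eq hk
  rw [← hquot, ← hderivs]
  exact hgid x hx y hy hxy

theorem norm_identity_of_homography_composition
    {p : ℕ} [Fact p.Prime] {K : Type*} [NontriviallyNormedField K] [Algebra ℚ_[p] K]
    (hK : IsPadicComplexField p K)
    (Y : Set K) (f f' : K → K)
    (hderiv : ∀ x ∈ Y, HasDerivWithinAt f (f' x) Y x)
    (a b c d : K) (hdet : a * d - b * c ≠ 0)
    (hcd : ∀ x ∈ Y, c * f x + d ≠ 0)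
    (g g' : K → K)
    (hg : ∀ x, g x = (a * f x + b) / (c * f x + d))
    (hg' : ∀ x, g' x = (a * d - b * c) / (c * f x + d) ^ 2 * f' x)
    (hginj : Set.InjOn g Y)
    (hgid : ∀ x ∈ Y, ∀ y ∈ Y, x ≠ y →
      ‖(g x - g y) / (x - y)‖ ^ 2 = ‖g' x * g' y‖) :
    ∀ x ∈ Y, ∀ y ∈ Y, x ≠ y →
      ‖(f x - f y) / (x - y)‖ ^ 2 = ‖f' x * f' y‖ :=
  norm_identity_of_homography_composition_general Y f f' a b c d hdet hcd g g' hg hg' hgid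
end

section
/- Let P(z) = z + z² ∈ ℂ_p[z] and let B = {z ∈ ℂ_p : |z| < 1}. For every rational function R ∈ ℂ_p(z) without poles in B, one has sup{ |R(P(z)) − z| : z ∈ B } ≥ 1; equivalently, for every ε > 0 there exists z ∈ B with |R(P(z)) − z| > 1 − ε. -/
/-!
Put `P = X + X²` and `h = q₁ ∘ P - (q₂ ∘ P) · X`, so that `q₁(P z) / q₂(P z) - z = h(z) / q₂(P z)`.
Since `q₂` has no zero in the open unit ball `B`, `‖q₂ z‖` is constant on `B`. As `P` has good
reduction, the reductions of `q₁ ∘ P` and `(q₂ ∘ P) · X` have degrees `2 deg q̄₁` and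
`2 deg q̄₂ + 1` of different parity, so they cannot cancel and some coefficient of `h` has norm at
least `‖q₂ 0‖`. Finally `sup_B ‖h‖` dominates the norm of every coefficient of `h`: averaging
`h(t ζ) ζ^(-j)` over the `N`-th roots of unity `ζ`, with `‖N‖ = 1` and `‖t‖` close to `1`,
isolates the `j`-th coefficient.
-/

open Polynomial Finset

namespace IsUltrametricDist

variable {K : Type*} [NormedField K] [IsUltrametricDist K]

lemma norm_add_eq_left_of_norm_lt {a b : K} (h : ‖b‖ < ‖a‖) : ‖a + b‖ = ‖a‖ := by
  rw [norm_add_eq_max_of_norm_ne_norm h.ne', max_eq_left h.le]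

lemma norm_sub_eq_left_of_norm_lt {a b : K} (h : ‖b‖ < ‖a‖) : ‖a - b‖ = ‖a‖ := by
  rw [sub_eq_add_neg, norm_add_eq_left_of_norm_lt (by rwa [norm_neg])]

lemma norm_sum_lt_of_forall_lt {ι : Type*} {s : Finset ι} {f : ι → K} {A : ℝ} (hA : 0 < A)
    (h : ∀ i ∈ s, ‖f i‖ < A) : ‖∑ i ∈ s, f i‖ < A := by
  rcases s.eq_empty_or_nonempty with rfl | hs
  · simpa using hA
  · obtain ⟨i, hi, hle⟩ := exists_norm_finsetSum_le_of_nonempty hs f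
    exact hle.trans_lt (h i hi)

lemma exists_lt_norm_natCast_eq_one (m : ℕ) : ∃ N : ℕ, m < N ∧ ‖(N : K)‖ = 1 := by
  by_cases h : ‖((m + 1 : ℕ) : K)‖ = 1
  · exact ⟨m + 1, by omega, h⟩
  · have hlt : ‖((m + 1 : ℕ) : K)‖ < 1 := (norm_natCast_le_one K _).lt_of_ne h
    refine ⟨m + 2, by omega, ?_⟩
    rw [show ((m + 2 : ℕ) : K) = ((m + 1 : ℕ) : K) + 1 by push_cast; ring,
      norm_add_eq_max_of_norm_ne_norm (by simpa using hlt.ne), norm_one, max_eq_right hlt.le]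

end IsUltrametricDist

namespace Polynomial

section DominantIndex

variable {K : Type*} [NormedField K]

/-- Equivalently, `m` is the degree of the reduction of `q / q.coeff m` modulo the maximal ideal
of the closed unit ball. -/
def IsDominantIndex (q : K[X]) (m : ℕ) : Prop :=
  (∀ k, ‖q.coeff k‖ ≤ ‖q.coeff m‖) ∧ ∀ k, m < k → ‖q.coeff k‖ < ‖q.coeff m‖

variable {q : K[X]} {m : ℕ}

lemma IsDominantIndex.coeff_ne_zero (h : IsDominantIndex q m) : q.coeff m ≠ 0 := by
  intro h0
  have := h.2 (m + 1) (by omega)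
  rw [h0, norm_zero] at this
  exact (norm_nonneg _).not_gt this

lemma exists_isDominantIndex (hq : q ≠ 0) : ∃ m, IsDominantIndex q m := by
  classical
  obtain ⟨a, -, ha⟩ := (range (q.natDegree + 1)).exists_max_image (fun k => ‖q.coeff k‖)
    ⟨0, by simp⟩
  have hmax : ∀ k, ‖q.coeff k‖ ≤ ‖q.coeff a‖ := by
    intro k
    by_cases hk : k ≤ q.natDegree
    · exact ha k (mem_range.2 (by omega))
    · simp [coeff_eq_zero_of_natDegree_lt (not_le.1 hk)]
  let P : ℕ → Prop := fun n => ∀ k, ‖q.coeff k‖ ≤ ‖q.coeff n‖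
  have hP : ∀ n, P n → n ≤ q.natDegree := fun n hn => le_natDegree_of_ne_zero fun h0 =>
    hq (leadingCoeff_eq_zero.1 (norm_le_zero_iff.1 (by simpa [h0] using hn q.natDegree)))
  have hm : P (Nat.findGreatest P q.natDegree) := Nat.findGreatest_spec (hP a hmax) hmax
  refine ⟨_, hm, fun k hk => (hm k).lt_of_ne fun heq => ?_⟩
  have hPk : P k := fun i => heq ▸ hm i
  exact Nat.findGreatest_is_greatest hk (hP k hPk) hPk

lemma IsDominantIndex.mul_X (h : IsDominantIndex q m) : IsDominantIndex (q * X) (m + 1) := by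
  refine ⟨fun k => ?_, fun k hk => ?_⟩
  · rcases k with _ | k
    · simp
    · simpa only [coeff_mul_X] using h.1 k
  · obtain _ | k := k
    · omega
    · simpa only [coeff_mul_X] using h.2 k (by omega)

lemma IsDominantIndex.exists_le_norm_coeff_sub [IsUltrametricDist K] {f g : K[X]} {i j : ℕ}
    (hf : IsDominantIndex f i) (hg : IsDominantIndex g j) (hij : i ≠ j) :
    ∃ k, max ‖f.coeff i‖ ‖g.coeff j‖ ≤ ‖(f - g).coeff k‖ := by
  wlog H : ‖g.coeff j‖ < ‖f.coeff i‖ ∨ ‖g.coeff j‖ = ‖f.coeff i‖ ∧ j < i generalizing f g i j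
  · obtain ⟨k, hk⟩ := this hg hf hij.symm (by
      rcases lt_trichotomy ‖f.coeff i‖ ‖g.coeff j‖ with hlt | heq | hgt
      · exact .inl hlt
      · exact .inr ⟨heq, hij.lt_of_le (not_lt.1 fun hji => H (.inr ⟨heq.symm, hji⟩))⟩
      · exact absurd (.inl hgt) H)
    exact ⟨k, by rwa [max_comm, ← neg_sub, coeff_neg, norm_neg]⟩
  have hgi : ‖g.coeff i‖ < ‖f.coeff i‖ := by
    rcases H with hlt | ⟨heq, hji⟩
    · exact (hg.1 i).trans_lt hlt
    · exact (hg.2 i hji).trans_eq heq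
  refine ⟨i, ?_⟩
  rw [coeff_sub, IsUltrametricDist.norm_sub_eq_left_of_norm_lt hgi]
  exact max_le le_rfl (H.elim le_of_lt fun h => h.1.le)

end DominantIndex

section Composition

variable {R : Type*} [CommSemiring R]

lemma coeff_X_add_X_sq_pow (n j : ℕ) :
    ((X + X ^ 2 : R[X]) ^ n).coeff j = if n ≤ j then ((n.choose (j - n) : ℕ) : R) else 0 := by
  rw [show (X + X ^ 2 : R[X]) = (1 + X) * X by ring, mul_pow, coeff_mul_X_pow',
    coeff_one_add_X_pow]

lemma coeff_X_add_X_sq_pow_of_two_mul_lt {n j : ℕ} (h : 2 * n < j) :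
    ((X + X ^ 2 : R[X]) ^ n).coeff j = 0 := by
  rw [coeff_X_add_X_sq_pow, if_pos (by omega), Nat.choose_eq_zero_of_lt (by omega), Nat.cast_zero]

lemma coeff_X_add_X_sq_pow_two_mul (n : ℕ) : ((X + X ^ 2 : R[X]) ^ n).coeff (2 * n) = 1 := by
  rw [coeff_X_add_X_sq_pow, if_pos (by omega), show 2 * n - n = n by omega, Nat.choose_self,
    Nat.cast_one]

lemma coeff_comp_eq_sum (q r : R[X]) (j : ℕ) :
    (q.comp r).coeff j = ∑ n ∈ q.support, q.coeff n * (r ^ n).coeff j := by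
  simp only [comp_eq_sum_left, Polynomial.sum, finsetSum_coeff, coeff_C_mul]

end Composition

section Ultrametric

variable {K : Type*} [NormedField K] [IsUltrametricDist K] {q : K[X]} {m : ℕ}

lemma norm_coeff_X_add_X_sq_pow_le_one (n j : ℕ) : ‖((X + X ^ 2 : K[X]) ^ n).coeff j‖ ≤ 1 := by
  rw [coeff_X_add_X_sq_pow]
  split_ifs
  · exact IsUltrametricDist.norm_natCast_le_one K _
  · simp

lemma norm_coeff_mul_coeff_X_add_X_sq_pow_le (n j : ℕ) :
    ‖q.coeff n * ((X + X ^ 2 : K[X]) ^ n).coeff j‖ ≤ ‖q.coeff n‖ := by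
  rw [norm_mul]
  exact mul_le_of_le_one_right (norm_nonneg _) (norm_coeff_X_add_X_sq_pow_le_one n j)

lemma IsDominantIndex.norm_coeff_mul_coeff_X_add_X_sq_pow_lt (h : IsDominantIndex q m) {n j : ℕ}
    (hnj : 2 * n < j ∨ m < n) :
    ‖q.coeff n * ((X + X ^ 2 : K[X]) ^ n).coeff j‖ < ‖q.coeff m‖ := by
  rcases hnj with hnj | hmn
  · simpa [coeff_X_add_X_sq_pow_of_two_mul_lt hnj] using h.coeff_ne_zero
  · exact (norm_coeff_mul_coeff_X_add_X_sq_pow_le n j).trans_lt (h.2 n hmn)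

lemma IsDominantIndex.norm_coeff_comp_le (h : IsDominantIndex q m) (j : ℕ) :
    ‖(q.comp (X + X ^ 2)).coeff j‖ ≤ ‖q.coeff m‖ := by
  rw [coeff_comp_eq_sum]
  exact IsUltrametricDist.norm_sum_le_of_forall_le_of_nonneg (norm_nonneg _)
    fun n _ => (norm_coeff_mul_coeff_X_add_X_sq_pow_le n j).trans (h.1 n)

lemma IsDominantIndex.norm_coeff_comp_lt (h : IsDominantIndex q m) {j : ℕ} (hj : 2 * m < j) :
    ‖(q.comp (X + X ^ 2)).coeff j‖ < ‖q.coeff m‖ := by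
  rw [coeff_comp_eq_sum]
  refine IsUltrametricDist.norm_sum_lt_of_forall_lt (norm_pos_iff.2 h.coeff_ne_zero) fun n _ => ?_
  exact h.norm_coeff_mul_coeff_X_add_X_sq_pow_lt (by omega)

lemma IsDominantIndex.norm_coeff_comp_two_mul (h : IsDominantIndex q m) :
    ‖(q.comp (X + X ^ 2)).coeff (2 * m)‖ = ‖q.coeff m‖ := by
  rw [coeff_comp_eq_sum, ← add_sum_erase _ _ (mem_support_iff.2 h.coeff_ne_zero),
    coeff_X_add_X_sq_pow_two_mul, mul_one]
  refine IsUltrametricDist.norm_add_eq_left_of_norm_lt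
    (IsUltrametricDist.norm_sum_lt_of_forall_lt (norm_pos_iff.2 h.coeff_ne_zero)
      fun n hn => h.norm_coeff_mul_coeff_X_add_X_sq_pow_lt ?_)
  have := ne_of_mem_erase hn
  omega

lemma IsDominantIndex.comp_X_add_X_sq (h : IsDominantIndex q m) :
    IsDominantIndex (q.comp (X + X ^ 2)) (2 * m) := by
  rw [IsDominantIndex, h.norm_coeff_comp_two_mul]
  exact ⟨h.norm_coeff_comp_le, fun _ => h.norm_coeff_comp_lt⟩

lemma exists_le_norm_coeff_comp_sub_comp_mul_X (q₁ q₂ : K[X]) (hq₂ : q₂ ≠ 0) :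
    ∃ j, ‖q₂.coeff 0‖ ≤ ‖(q₁.comp (X + X ^ 2) - q₂.comp (X + X ^ 2) * X).coeff j‖ := by
  obtain ⟨m₂, h₂⟩ := exists_isDominantIndex hq₂
  have hg := h₂.comp_X_add_X_sq.mul_X
  have hg_norm : ‖(q₂.comp (X + X ^ 2) * X).coeff (2 * m₂ + 1)‖ = ‖q₂.coeff m₂‖ := by
    rw [coeff_mul_X, h₂.norm_coeff_comp_two_mul]
  rcases eq_or_ne q₁ 0 with rfl | hq₁
  · refine ⟨2 * m₂ + 1, ?_⟩
    rw [zero_comp, zero_sub, coeff_neg, norm_neg, hg_norm]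
    exact h₂.1 0
  · obtain ⟨m₁, h₁⟩ := exists_isDominantIndex hq₁
    -- the dominant indices `2 * m₁` and `2 * m₂ + 1` differ by parity
    obtain ⟨k, hk⟩ := h₁.comp_X_add_X_sq.exists_le_norm_coeff_sub hg (by omega)
    exact ⟨k, (h₂.1 0).trans (hg_norm ▸ (le_max_right _ _).trans hk)⟩

lemma norm_eval_eq_norm_eval_zero [IsAlgClosed K] {q : K[X]}
    (hq : ∀ z : K, ‖z‖ < 1 → q.eval z ≠ 0) {w : K} (hw : ‖w‖ < 1) :
    ‖q.eval w‖ = ‖q.eval 0‖ := by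
  have hq0 : q ≠ 0 := fun h => hq 0 (by simp) (by simp [h])
  have hroots : ∀ a ∈ q.roots, 1 ≤ ‖a‖ := fun a ha =>
    not_lt.1 fun h => hq a h ((mem_roots hq0).1 ha)
  have hnorm : ∀ u : K, ‖u‖ < 1 →
      ‖q.eval u‖ = ‖q.leadingCoeff‖ * (q.roots.map fun a => ‖a‖).prod := by
    intro u hu
    rw [(IsAlgClosed.splits q).eval_eq_prod_roots, norm_mul]
    congr 1
    rw [← normHom_apply, map_multiset_prod, Multiset.map_map]
    congr 1
    refine Multiset.map_congr rfl fun a ha => ?_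
    rw [Function.comp_apply, normHom_apply, norm_sub_rev,
      IsUltrametricDist.norm_sub_eq_left_of_norm_lt (hu.trans_le (hroots a ha))]
  rw [hnorm w hw, hnorm 0 (by simp)]

end Ultrametric

end Polynomial

section RootsOfUnity

variable {F : Type*} [Field F] {ζ : F} {N : ℕ}

lemma IsPrimitiveRoot.geom_sum_pow_eq_zero (hζ : IsPrimitiveRoot ζ N) {e : ℕ} (he : ¬ N ∣ e) :
    ∑ i ∈ range N, (ζ ^ e) ^ i = 0 := by
  rw [geom_sum_eq (mt (hζ.pow_eq_one_iff_dvd e).1 he), ← pow_mul, mul_comm, pow_mul,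
    hζ.pow_eq_one, one_pow, sub_self, zero_div]

lemma Polynomial.sum_eval_mul_pow_eq (hζ : IsPrimitiveRoot ζ N) {p : F[X]} (hp : p.natDegree < N)
    {j : ℕ} (hj : j < N) (t : F) :
    ∑ i ∈ range N, p.eval (t * ζ ^ i) * (ζ ^ (N - j)) ^ i = N * p.coeff j * t ^ j := by
  calc ∑ i ∈ range N, p.eval (t * ζ ^ i) * (ζ ^ (N - j)) ^ i
      = ∑ i ∈ range N, ∑ k ∈ range N, p.coeff k * t ^ k * (ζ ^ (k + (N - j))) ^ i := by
        refine sum_congr rfl fun i _ => ?_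
        rw [eval_eq_sum_range' hp, sum_mul]
        exact sum_congr rfl fun k _ => by ring
    _ = ∑ k ∈ range N, p.coeff k * t ^ k * ∑ i ∈ range N, (ζ ^ (k + (N - j))) ^ i := by
        rw [sum_comm]
        simp_rw [mul_sum]
    _ = N * p.coeff j * t ^ j := by
        rw [sum_eq_single_of_mem j (mem_range.2 hj)]
        · rw [show j + (N - j) = N by omega, hζ.pow_eq_one]
          simp only [one_pow, sum_const, card_range, nsmul_eq_mul, mul_one]
          ring
        · intro k hk hkj
          refine mul_eq_zero_of_right _ (hζ.geom_sum_pow_eq_zero fun hdvd => hkj ?_)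
          have := Nat.eq_of_dvd_of_lt_two_mul (by omega) hdvd (by rw [mem_range] at hk; omega)
          omega

end RootsOfUnity

section AlgClosed

variable {K : Type*} [NontriviallyNormedField K] [IsAlgClosed K]

lemma IsAlgClosed.exists_lt_norm_lt_one {r : ℝ} (hr : r < 1) : ∃ t : K, r < ‖t‖ ∧ ‖t‖ < 1 := by
  obtain ⟨c, hc0, hc1⟩ := NormedField.exists_norm_lt_one K
  obtain ⟨k, hk⟩ := exists_pow_lt_of_lt_one hc0 hr
  have hk0 : k ≠ 0 := by
    rintro rfl
    exact (pow_zero r ▸ hk).not_gt hc1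
  obtain ⟨t, rfl⟩ := IsAlgClosed.exists_pow_nat_eq c (Nat.pos_of_ne_zero hk0)
  rw [norm_pow] at hc1 hk
  exact ⟨t, lt_of_pow_lt_pow_left₀ k (norm_nonneg t) hk,
    (pow_lt_one_iff_of_nonneg (norm_nonneg t) hk0).1 hc1⟩

lemma IsAlgClosed.exists_norm_lt_one_lt_mul_norm_pow (n : ℕ) {a δ : ℝ} (hδ : δ < a) :
    ∃ t : K, ‖t‖ < 1 ∧ δ < a * ‖t‖ ^ n := by
  have hcont : Filter.Tendsto (fun x : ℝ => a * x ^ n) (nhdsWithin 1 (Set.Iio 1)) (nhds a) := by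
    refine ((by fun_prop : Continuous fun x : ℝ => a * x ^ n).tendsto' 1 a ?_).mono_left
      nhdsWithin_le_nhds
    simp
  obtain ⟨l, hl, hsub⟩ := mem_nhdsLT_iff_exists_Ioo_subset.1 (hcont.eventually (lt_mem_nhds hδ))
  obtain ⟨t, hlt, ht1⟩ := exists_lt_norm_lt_one (K := K) hl
  exact ⟨t, ht1, hsub ⟨hlt, ht1⟩⟩

variable [IsUltrametricDist K]

lemma Polynomial.exists_norm_eval_gt_of_lt_norm_coeff (p : K[X]) {j : ℕ} {δ : ℝ}
    (hδ : δ < ‖p.coeff j‖) : ∃ z : K, ‖z‖ < 1 ∧ δ < ‖p.eval z‖ := by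
  obtain ⟨t, ht1, hδt⟩ := IsAlgClosed.exists_norm_lt_one_lt_mul_norm_pow (K := K) j hδ
  obtain ⟨N, hN, hN1⟩ :=
    IsUltrametricDist.exists_lt_norm_natCast_eq_one (K := K) (max j p.natDegree)
  have : NeZero (N : K) := ⟨fun h => by simp [h] at hN1⟩
  obtain ⟨ζ, hζ⟩ := HasEnoughRootsOfUnity.exists_primitiveRoot K N
  have hζ1 : ‖ζ‖ = 1 := (hζ.isOfFinOrder (by omega)).norm_eq_one
  -- the average of `p (t ζ^i) ζ^(-i j)` over the `N`-th roots of unity is `p.coeff j * t ^ j`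
  obtain ⟨i, -, hi⟩ := IsUltrametricDist.exists_norm_finsetSum_le_of_nonempty
    (nonempty_range_iff.2 (by omega : N ≠ 0)) fun i => p.eval (t * ζ ^ i) * (ζ ^ (N - j)) ^ i
  rw [sum_eval_mul_pow_eq hζ (by omega) (by omega), norm_mul, norm_mul, hN1, one_mul, norm_pow,
    norm_mul, norm_pow, norm_pow, hζ1, one_pow, one_pow, mul_one] at hi
  exact ⟨t * ζ ^ i, by rwa [norm_mul, norm_pow, hζ1, one_pow, mul_one], hδt.trans_le hi⟩

end AlgClosed

theorem sup_norm_rational_comp_sub_id_ge_one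
    {p : ℕ} [Fact p.Prime] {K : Type*} [NontriviallyNormedField K] [Algebra ℚ_[p] K]
    (hK : IsPadicComplexField p K)
    (q₁ q₂ : Polynomial K) (hq₂ : ∀ z : K, ‖z‖ < 1 → q₂.eval z ≠ 0) :
    ∀ ε : ℝ, 0 < ε → ∃ z : K, ‖z‖ < 1 ∧
      1 - ε < ‖q₁.eval (z + z ^ 2) / q₂.eval (z + z ^ 2) - z‖ := by
  intro ε hε
  have := hK.isUltrametricDist
  have := hK.isAlgClosed
  have hq₂0 : q₂ ≠ 0 := fun h => hq₂ 0 (by simp) (by simp [h])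
  have hc : 0 < ‖q₂.eval 0‖ := norm_pos_iff.2 (hq₂ 0 (by simp))
  obtain ⟨j, hj⟩ := exists_le_norm_coeff_comp_sub_comp_mul_X q₁ q₂ hq₂0
  obtain ⟨z, hz, hlt⟩ := exists_norm_eval_gt_of_lt_norm_coeff _
    (δ := (1 - ε) * ‖q₂.eval 0‖) (by rw [← coeff_zero_eq_eval_zero] at hc ⊢; nlinarith)
  have hPz : ‖z + z ^ 2‖ < 1 := (IsUltrametricDist.norm_add_le_max _ _).trans_lt
    (max_lt hz (by rw [norm_pow]; exact pow_lt_one₀ (norm_nonneg z) hz two_ne_zero))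
  have hq₂z := hq₂ _ hPz
  refine ⟨z, hz, ?_⟩
  rw [div_sub' hq₂z, norm_div, lt_div_iff₀ (norm_pos_iff.2 hq₂z),
    norm_eval_eq_norm_eval_zero hq₂ hPz]
  simpa [eval_comp, mul_comm] using hlt
end
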